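/- Under the Wallenius noncentral hypergeometric sampling scheme, with $X_i = \ell_i$ and $f = \sum_{j=1}^n X_j$, for every $i \in [n]$ and every realization of $X_1,\dots,X_{i-1}$, it holds that $0 \leq \mathbb{E}[f \mid X_1,\dots,X_{i-1}, X_i = 1] - \mathbb{E}[f \mid X_1,\dots,X_{i-1}, X_i = 0] \leq 1$. -/

import Mathlib

open Finset Classical

/-- Number of ones among the first `i` draws (positions `j < i`). -/
def prefOnes {n : ℕ} (ℓ : Fin n → Bool) (i : Fin n) : ℕ :=
  (Finset.univ.filter (fun j => j < i ∧ ℓ j = true)).card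

/-- Probability mass of a draw sequence under the Wallenius noncentral
hypergeometric sampling scheme. -/
noncomputable def wWeight (m1 m0 : ℕ) (w1 w0 : ℝ) {n : ℕ} (ℓ : Fin n → Bool) : ℝ :=
  ∏ i : Fin n,
    (if ℓ i then
      ((m1 : ℝ) - prefOnes ℓ i) * w1 /
        (((m1 : ℝ) - prefOnes ℓ i) * w1 + ((m0 : ℝ) - ((i : ℕ) - prefOnes ℓ i : ℕ)) * w0)
    else
      ((m0 : ℝ) - ((i : ℕ) - prefOnes ℓ i : ℕ)) * w0 /
        (((m1 : ℝ) - prefOnes ℓ i) * w1 + ((m0 : ℝ) - ((i : ℕ) - prefOnes ℓ i : ℕ)) * w0))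

/-- `f = ∑ⱼ Xⱼ`, the total number of ones drawn. -/
noncomputable def fsum {n : ℕ} (ℓ : Fin n → Bool) : ℝ :=
  ∑ j, (if ℓ j then (1 : ℝ) else 0)

/-- Conditional expectation of `f` given that the draws at positions `j < i` agree with
the prefix `a` and the draw at position `i` equals `b`. -/
noncomputable def condE (m1 m0 : ℕ) (w1 w0 : ℝ) {n : ℕ} (i : Fin n) (a : Fin n → Bool)
    (b : Bool) : ℝ :=
  (∑ ℓ ∈ Finset.univ.filter
      (fun ℓ : Fin n → Bool => (∀ j, j < i → ℓ j = a j) ∧ ℓ i = b),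
    wWeight m1 m0 w1 w0 ℓ * fsum ℓ) /
  (∑ ℓ ∈ Finset.univ.filter
      (fun ℓ : Fin n → Bool => (∀ j, j < i → ℓ j = a j) ∧ ℓ i = b),
    wWeight m1 m0 w1 w0 ℓ)

namespace W15

noncomputable def pE (w1 w0 : ℝ) : ℕ → ℕ → ℕ → ℝ
  | 0, _, _ => 0
  | t+1, r1, r0 =>
      ((r1:ℝ)*w1/((r1:ℝ)*w1+(r0:ℝ)*w0)) * (1 + pE w1 w0 t (r1-1) r0)
      + ((r0:ℝ)*w0/((r1:ℝ)*w1+(r0:ℝ)*w0)) * pE w1 w0 t r1 (r0-1)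

section PE
variable {w1 w0 : ℝ}

lemma frac_nonneg {A B : ℝ} (hA : 0 ≤ A) (hB : 0 ≤ B) : 0 ≤ A/(A+B) :=
  div_nonneg hA (by linarith)

lemma frac_le_one {A B : ℝ} (hA : 0 ≤ A) (hB : 0 ≤ B) : A/(A+B) ≤ 1 := by
  rcases eq_or_lt_of_le (by linarith : (0:ℝ) ≤ A + B) with h | h
  · have hA0 : A = 0 := by linarith
    simp [hA0, ← h]
  · rw [div_le_one h]; linarith

lemma frac_sum_le_one {A B : ℝ} (hA : 0 ≤ A) (hB : 0 ≤ B) :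
    A/(A+B) + B/(A+B) ≤ 1 := by
  rw [← add_div]
  rcases eq_or_lt_of_le (by linarith : (0:ℝ) ≤ A + B) with h | h
  · simp [← h]
  · rw [div_le_one h]

lemma frac_sum_eq_one {A B : ℝ} (h : 0 < A + B) : A/(A+B) + B/(A+B) = 1 := by
  rw [← add_div, div_self h.ne']

lemma pE_zero_left (w1 w0 : ℝ) : ∀ t r0, pE w1 w0 t 0 r0 = 0 := by
  intro t
  induction t with
  | zero => intro r0; simp [pE]
  | succ t ih => intro r0; simp [pE, ih]

variable (hw1 : 0 < w1) (hw0 : 0 < w0)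
include hw1 hw0

lemma pE_nonneg : ∀ (t r1 r0 : ℕ), 0 ≤ pE w1 w0 t r1 r0 := by
  intro t
  induction t with
  | zero => intro r1 r0; simp [pE]
  | succ t ih =>
    intro r1 r0
    have h1 : (0:ℝ) ≤ (r1:ℝ)*w1 := by positivity
    have h0 : (0:ℝ) ≤ (r0:ℝ)*w0 := by positivity
    have hp := frac_nonneg h1 h0
    have hq : 0 ≤ (r0:ℝ)*w0/((r1:ℝ)*w1+(r0:ℝ)*w0) := by
      rw [add_comm ((r1:ℝ)*w1)] at hp ⊢; exact frac_nonneg h0 h1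
    simp only [pE]
    nlinarith [ih (r1-1) r0, ih r1 (r0-1)]

lemma pE_le_t : ∀ (t r1 r0 : ℕ), pE w1 w0 t r1 r0 ≤ t := by
  intro t
  induction t with
  | zero => intro r1 r0; simp [pE]
  | succ t ih =>
    intro r1 r0
    have h1 : (0:ℝ) ≤ (r1:ℝ)*w1 := by positivity
    have h0 : (0:ℝ) ≤ (r0:ℝ)*w0 := by positivity
    have hp := frac_nonneg h1 h0
    have hq : 0 ≤ (r0:ℝ)*w0/((r1:ℝ)*w1+(r0:ℝ)*w0) := by
      rw [add_comm ((r1:ℝ)*w1)]; exact frac_nonneg h0 h1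
    have hpq := frac_sum_le_one h1 h0
    simp only [pE]
    push_cast
    nlinarith [ih (r1-1) r0, ih r1 (r0-1), pE_nonneg hw1 hw0 t (r1-1) r0,
      pE_nonneg hw1 hw0 t r1 (r0-1)]

lemma pE_le_r1 : ∀ (t r1 r0 : ℕ), pE w1 w0 t r1 r0 ≤ r1 := by
  intro t
  induction t with
  | zero => intro r1 r0; simp [pE]
  | succ t ih =>
    intro r1 r0
    match r1 with
    | 0 => rw [pE_zero_left]; simp
    | s+1 =>
      have h1 : (0:ℝ) ≤ ((s+1:ℕ):ℝ)*w1 := by positivity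
      have h0 : (0:ℝ) ≤ (r0:ℝ)*w0 := by positivity
      have hp := frac_nonneg h1 h0
      have hq : 0 ≤ (r0:ℝ)*w0/(((s+1:ℕ):ℝ)*w1+(r0:ℝ)*w0) := by
        rw [add_comm (((s+1:ℕ):ℝ)*w1)]; exact frac_nonneg h0 h1
      have hpq := frac_sum_le_one h1 h0
      simp only [pE, Nat.add_sub_cancel]
      have e1 := ih s r0
      have e2 := ih (s+1) (r0-1)
      push_cast at *
      nlinarith [pE_nonneg hw1 hw0 t s r0, pE_nonneg hw1 hw0 t (s+1) (r0-1)]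

lemma pE_ge : ∀ (t r1 r0 : ℕ), t ≤ r1 + r0 → (t:ℝ) - r0 ≤ pE w1 w0 t r1 r0 := by
  intro t
  induction t with
  | zero => intro r1 r0 _; simp [pE]
  | succ t ih =>
    intro r1 r0 hle
    match r1 with
    | 0 =>
      rw [pE_zero_left]
      have : t + 1 ≤ r0 := by omega
      push_cast
      have : ((t:ℝ)+1) ≤ r0 := by exact_mod_cast this
      linarith
    | s+1 =>
      have h1 : (0:ℝ) < ((s+1:ℕ):ℝ)*w1 := by positivity
      have h0 : (0:ℝ) ≤ (r0:ℝ)*w0 := by positivity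
      have hp := frac_nonneg h1.le h0
      have hq : 0 ≤ (r0:ℝ)*w0/(((s+1:ℕ):ℝ)*w1+(r0:ℝ)*w0) := by
        rw [add_comm (((s+1:ℕ):ℝ)*w1)]; exact frac_nonneg h0 h1.le
      have hpq : ((s+1:ℕ):ℝ)*w1/(((s+1:ℕ):ℝ)*w1+(r0:ℝ)*w0)
          + (r0:ℝ)*w0/(((s+1:ℕ):ℝ)*w1+(r0:ℝ)*w0) = 1 :=
        frac_sum_eq_one (by linarith)
      simp only [pE, Nat.add_sub_cancel]
      have e1 : (t:ℝ) - r0 ≤ pE w1 w0 t s r0 := ih s r0 (by omega)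
      rcases Nat.eq_zero_or_pos r0 with hr0 | hr0
      · subst hr0
        have h1' : ((s+1:ℕ):ℝ) * w1 ≠ 0 := h1.ne'
        simp only [Nat.cast_zero, zero_mul, add_zero, zero_div, mul_zero, zero_add, sub_zero]
        rw [div_self h1']
        simp only [Nat.cast_zero, sub_zero] at e1
        push_cast
        linarith
      · have e2 : (t:ℝ) - ((r0-1:ℕ):ℝ) ≤ pE w1 w0 t (s+1) (r0-1) := ih (s+1) (r0-1) (by omega)
        have hc : ((r0-1:ℕ):ℝ) = (r0:ℝ) - 1 := by
          push_cast [Nat.cast_sub hr0]; ring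
        rw [hc] at e2
        have m1' := mul_le_mul_of_nonneg_left
          (by linarith : (t:ℝ) - (r0:ℝ) + 1 ≤ 1 + pE w1 w0 t s r0) hp
        have m2' := mul_le_mul_of_nonneg_left
          (by linarith : (t:ℝ) - (r0:ℝ) + 1 ≤ pE w1 w0 t (s+1) (r0-1)) hq
        push_cast at hpq m1' m2' ⊢
        nlinarith [m1', m2', hpq]

omit hw1 hw0 in
lemma core (p1 q1 p2 q2 a U V : ℝ) (hp1q1 : p1 + q1 = 1) (hp2q2 : p2 + q2 = 1)
    (hq1n : 0 ≤ q1) (hp2n : 0 ≤ p2) (hptwo : p2 ≤ p1)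
    (hU0 : 0 ≤ U - a) (hU1 : U - a ≤ 1) (hV0 : 0 ≤ a - V) (hV1 : a - V ≤ 1) :
    0 ≤ p1 * (1 + a) + q1 * U - (p2 * (1 + V) + q2 * a) ∧
    p1 * (1 + a) + q1 * U - (p2 * (1 + V) + q2 * a) ≤ 1 := by
  have hq1' : q1 = 1 - p1 := by linarith
  have hq2' : q2 = 1 - p2 := by linarith
  subst hq1' hq2'
  have h1 := mul_nonneg hq1n hU0
  have h2 := mul_nonneg hp2n hV0
  have h3 := mul_nonneg hq1n (by linarith : (0:ℝ) ≤ 1 - (U - a))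
  have h4 := mul_nonneg hp2n (by linarith : (0:ℝ) ≤ 1 - (a - V))
  constructor <;> nlinarith [h1, h2, h3, h4]

lemma pE_D : ∀ (t r1 r0 : ℕ), 1 ≤ r1 → 1 ≤ r0 → t ≤ r1 + r0 - 1 →
    0 ≤ pE w1 w0 t r1 (r0-1) - pE w1 w0 t (r1-1) r0 ∧
    pE w1 w0 t r1 (r0-1) - pE w1 w0 t (r1-1) r0 ≤ 1 := by
  intro t
  induction t with
  | zero => intro r1 r0 _ _ _; simp [pE]
  | succ t ih =>
    intro r1 r0 hr1 hr0 hle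
    match r1, r0 with
    | s1+1, s0+1 =>
    simp only [Nat.add_sub_cancel]
    rcases Nat.eq_zero_or_pos s1 with hs1 | hs1
    · subst hs1
      rw [pE_zero_left]
      constructor
      · simpa using pE_nonneg hw1 hw0 (t+1) 1 s0
      · simpa using pE_le_r1 hw1 hw0 (t+1) 1 s0
    rcases Nat.eq_zero_or_pos s0 with hs0 | hs0
    · subst hs0
      have hA : pE w1 w0 (t+1) (s1+1) 0 = ((t+1:ℕ):ℝ) := by
        have hgeA := pE_ge hw1 hw0 (t+1) (s1+1) 0 (by omega)
        have hleA := pE_le_t hw1 hw0 (t+1) (s1+1) 0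
        push_cast at hgeA hleA ⊢
        linarith
      have hgeB : ((t:ℕ):ℝ) ≤ pE w1 w0 (t+1) s1 1 := by
        have := pE_ge hw1 hw0 (t+1) s1 1 (by omega)
        push_cast at this ⊢; linarith
      have hleB := pE_le_t hw1 hw0 (t+1) s1 1
      rw [hA]
      push_cast at hgeB hleB ⊢
      constructor <;> linarith
    · have key1 := ih (s1+1) s0 (by omega) hs0 (by omega)
      have key2 := ih s1 (s0+1) hs1 (by omega) (by omega)
      simp only [Nat.add_sub_cancel] at key1 key2
      have hA1 : (0:ℝ) < ((s1+1:ℕ):ℝ)*w1 := by positivity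
      have hB1 : (0:ℝ) < ((s0:ℕ):ℝ)*w0 := by
        have : (0:ℝ) < (s0:ℝ) := by exact_mod_cast hs0
        positivity
      have hA2 : (0:ℝ) < ((s1:ℕ):ℝ)*w1 := by
        have : (0:ℝ) < (s1:ℝ) := by exact_mod_cast hs1
        positivity
      have hB2 : (0:ℝ) < ((s0+1:ℕ):ℝ)*w0 := by positivity
      have hptwo : ((s1:ℕ):ℝ)*w1/(((s1:ℕ):ℝ)*w1+((s0+1:ℕ):ℝ)*w0)
          ≤ ((s1+1:ℕ):ℝ)*w1/(((s1+1:ℕ):ℝ)*w1+((s0:ℕ):ℝ)*w0) := by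
        rw [div_le_div_iff₀ (by linarith) (by linarith)]
        have hc1 : ((s1+1:ℕ):ℝ) = (s1:ℝ)+1 := by push_cast; ring
        have hc0 : ((s0+1:ℕ):ℝ) = (s0:ℝ)+1 := by push_cast; ring
        rw [hc1, hc0]
        nlinarith [mul_pos hA2 hB1]
      simp only [pE, Nat.add_sub_cancel]
      exact core _ _ _ _ _ _ _
        (frac_sum_eq_one (by linarith)) (frac_sum_eq_one (by linarith))
        (by rw [add_comm (((s1+1:ℕ):ℝ)*w1)]; exact frac_nonneg hB1.le hA1.le)
        (frac_nonneg hA2.le hB2.le) hptwo key1.1 key1.2 key2.1 key2.2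


end PE

open Finset Classical

section Comb

variable {n : ℕ} (m1 m0 : ℕ) (w1 w0 : ℝ)

noncomputable def F (k1 k0 : ℕ) (b : Bool) : ℝ :=
  if b then ((m1:ℝ) - k1) * w1 / (((m1:ℝ) - k1) * w1 + ((m0:ℝ) - k0) * w0)
  else ((m0:ℝ) - k0) * w0 / (((m1:ℝ) - k1) * w1 + ((m0:ℝ) - k0) * w0)

noncomputable def cnt (a : Fin n → Bool) (b : Bool) (i : ℕ) : ℕ :=
  (Finset.univ.filter (fun j : Fin n => (j:ℕ) < i ∧ a j = b)).card

noncomputable def wpre (a : Fin n → Bool) (i : ℕ) : ℝ :=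
  ∏ j ∈ Finset.univ.filter (fun j : Fin n => (j:ℕ) < i),
    F m1 m0 w1 w0 (cnt a true (j:ℕ)) (cnt a false (j:ℕ)) (a j)

noncomputable def sufOnes (ℓ : Fin n → Bool) (i : ℕ) : ℝ :=
  ∑ j ∈ Finset.univ.filter (fun j : Fin n => i ≤ (j:ℕ)), (if ℓ j then (1:ℝ) else 0)

noncomputable def Ag (a : Fin n → Bool) (i : ℕ) : Finset (Fin n → Bool) :=
  Finset.univ.filter (fun ℓ : Fin n → Bool => ∀ j : Fin n, (j:ℕ) < i → ℓ j = a j)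

variable {m1 m0 w1 w0}

lemma cardFinLt (i : ℕ) (h : i ≤ n) :
    (Finset.univ.filter (fun j : Fin n => (j:ℕ) < i)).card = i := by
  have he : (Finset.univ.filter (fun j : Fin n => (j:ℕ) < i)).map Fin.valEmbedding
      = Finset.range i := by
    ext x
    simp only [Finset.mem_map, Finset.mem_filter, Finset.mem_univ, true_and, Finset.mem_range,
      Fin.valEmbedding_apply]
    constructor
    · rintro ⟨j, hj, rfl⟩; exact hj
    · intro hx; exact ⟨⟨x, lt_of_lt_of_le hx h⟩, hx, rfl⟩
  calc (Finset.univ.filter (fun j : Fin n => (j:ℕ) < i)).card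
      = ((Finset.univ.filter (fun j : Fin n => (j:ℕ) < i)).map Fin.valEmbedding).card :=
        (Finset.card_map _).symm
    _ = (Finset.range i).card := by rw [he]
    _ = i := Finset.card_range i

lemma cnt_total (a : Fin n → Bool) (i : ℕ) (h : i ≤ n) :
    cnt a true i + cnt a false i = i := by
  have h1 : ∀ b, Finset.univ.filter (fun j : Fin n => (j:ℕ) < i ∧ a j = b)
      = (Finset.univ.filter (fun j : Fin n => (j:ℕ) < i)).filter (fun j => a j = b) := by
    intro b; rw [Finset.filter_filter]
  rw [cnt, cnt, h1 true, h1 false]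
  have h2 : (Finset.univ.filter (fun j : Fin n => (j:ℕ) < i)).filter (fun j => a j = false)
      = (Finset.univ.filter (fun j : Fin n => (j:ℕ) < i)).filter (fun j => ¬ a j = true) := by
    apply Finset.filter_congr; intro j _; simp
  rw [h2, Finset.card_filter_add_card_filter_not, cardFinLt i h]

lemma cnt_mono (a : Fin n → Bool) (b : Bool) {i i' : ℕ} (h : i ≤ i') :
    cnt a b i ≤ cnt a b i' := by
  apply Finset.card_le_card
  intro j hj
  simp only [Finset.mem_filter] at hj ⊢
  exact ⟨hj.1, lt_of_lt_of_le hj.2.1 h, hj.2.2⟩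

lemma cnt_succ (a : Fin n → Bool) (b : Bool) {i : ℕ} (h : i < n) :
    cnt a b (i+1) = cnt a b i + (if a ⟨i, h⟩ = b then 1 else 0) := by
  set I : Fin n := ⟨i, h⟩
  have hnm : I ∉ Finset.univ.filter (fun j : Fin n => (j:ℕ) < i ∧ a j = b) := by
    simp [I]
  by_cases hb : a I = b
  · have he : Finset.univ.filter (fun j : Fin n => (j:ℕ) < i+1 ∧ a j = b)
        = insert I (Finset.univ.filter (fun j : Fin n => (j:ℕ) < i ∧ a j = b)) := by
      ext j
      simp only [Finset.mem_filter, Finset.mem_univ, true_and, Finset.mem_insert]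
      constructor
      · rintro ⟨hj, hbj⟩
        rcases Nat.lt_succ_iff_lt_or_eq.mp hj with h' | h'
        · exact Or.inr ⟨h', hbj⟩
        · exact Or.inl (Fin.ext h')
      · rintro (rfl | ⟨hj, hbj⟩)
        · exact ⟨Nat.lt_succ_self _, hb⟩
        · exact ⟨Nat.lt_succ_of_lt hj, hbj⟩
    rw [cnt, he, Finset.card_insert_of_notMem hnm, if_pos hb, cnt, add_comm]
  · have he : Finset.univ.filter (fun j : Fin n => (j:ℕ) < i+1 ∧ a j = b)
        = Finset.univ.filter (fun j : Fin n => (j:ℕ) < i ∧ a j = b) := by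
      ext j
      simp only [Finset.mem_filter, Finset.mem_univ, true_and]
      constructor
      · rintro ⟨hj, hbj⟩
        rcases Nat.lt_succ_iff_lt_or_eq.mp hj with h' | h'
        · exact ⟨h', hbj⟩
        · have hji : j = I := Fin.ext h'
          exact absurd (hji ▸ hbj) hb
      · rintro ⟨hj, hbj⟩
        exact ⟨Nat.lt_succ_of_lt hj, hbj⟩
    rw [cnt, he, if_neg hb, cnt, add_zero]

lemma cnt_agree {a ℓ : Fin n → Bool} {i : ℕ}
    (hag : ∀ j : Fin n, (j:ℕ) < i → ℓ j = a j) (b : Bool) {k : ℕ} (hk : k ≤ i) :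
    cnt ℓ b k = cnt a b k := by
  unfold cnt
  congr 1
  apply Finset.filter_congr
  intro j _
  constructor
  · rintro ⟨hj, hbj⟩; exact ⟨hj, by rw [← hag j (lt_of_lt_of_le hj hk)]; exact hbj⟩
  · rintro ⟨hj, hbj⟩; exact ⟨hj, by rw [hag j (lt_of_lt_of_le hj hk)]; exact hbj⟩

lemma wpre_succ (a : Fin n → Bool) {i : ℕ} (h : i < n) :
    wpre m1 m0 w1 w0 a (i+1)
      = wpre m1 m0 w1 w0 a i * F m1 m0 w1 w0 (cnt a true i) (cnt a false i) (a ⟨i, h⟩) := by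
  set I : Fin n := ⟨i, h⟩
  have hnm : I ∉ Finset.univ.filter (fun j : Fin n => (j:ℕ) < i) := by simp [I]
  have he : Finset.univ.filter (fun j : Fin n => (j:ℕ) < i+1)
      = insert I (Finset.univ.filter (fun j : Fin n => (j:ℕ) < i)) := by
    ext j
    simp only [Finset.mem_filter, Finset.mem_univ, true_and, Finset.mem_insert]
    constructor
    · intro hj
      rcases Nat.lt_succ_iff_lt_or_eq.mp hj with h' | h'
      · exact Or.inr h'
      · exact Or.inl (Fin.ext h')
    · rintro (rfl | hj)
      · exact Nat.lt_succ_self _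
      · exact Nat.lt_succ_of_lt hj
  rw [wpre, he, Finset.prod_insert hnm, wpre, mul_comm]

lemma wpre_congr {a ℓ : Fin n → Bool} {i : ℕ}
    (hag : ∀ j : Fin n, (j:ℕ) < i → ℓ j = a j) :
    wpre m1 m0 w1 w0 ℓ i = wpre m1 m0 w1 w0 a i := by
  apply Finset.prod_congr rfl
  intro j hj
  rw [Finset.mem_filter] at hj
  rw [hag j hj.2, cnt_agree hag true (le_of_lt hj.2), cnt_agree hag false (le_of_lt hj.2)]

lemma prefOnes_eq (ℓ : Fin n → Bool) (i : Fin n) : prefOnes ℓ i = cnt ℓ true (i:ℕ) := by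
  unfold prefOnes cnt
  congr 1

lemma wWeight_eq (ℓ : Fin n → Bool) :
    wWeight m1 m0 w1 w0 ℓ = wpre m1 m0 w1 w0 ℓ n := by
  rw [wWeight, wpre]
  rw [Finset.filter_true_of_mem (fun j _ => j.isLt)]
  apply Finset.prod_congr rfl
  intro i _
  rw [prefOnes_eq ℓ i]
  have h2 : ((i:ℕ) - cnt ℓ true (i:ℕ) : ℕ) = cnt ℓ false (i:ℕ) := by
    have := cnt_total ℓ (i:ℕ) (le_of_lt i.isLt)
    omega
  rw [h2]
  cases hb : ℓ i <;> simp [F, hb]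

lemma wWeight_zero_one {ℓ : Fin n → Bool} (I : Fin n) (h1 : ℓ I = true)
    (h2 : cnt ℓ true (I:ℕ) = m1) : wWeight m1 m0 w1 w0 ℓ = 0 := by
  rw [wWeight_eq]
  apply Finset.prod_eq_zero (i := I) (by simp [I.isLt])
  rw [h1, h2]
  simp [F]

lemma wWeight_zero_zero {ℓ : Fin n → Bool} (I : Fin n) (h1 : ℓ I = false)
    (h2 : cnt ℓ false (I:ℕ) = m0) : wWeight m1 m0 w1 w0 ℓ = 0 := by
  rw [wWeight_eq]
  apply Finset.prod_eq_zero (i := I) (by simp [I.isLt])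
  rw [h1, h2]
  simp [F]

lemma sufOnes_n (ℓ : Fin n → Bool) : sufOnes ℓ n = 0 := by
  rw [sufOnes]
  have : Finset.univ.filter (fun j : Fin n => n ≤ (j:ℕ)) = ∅ := by
    apply Finset.filter_false_of_mem
    intro j _
    exact Nat.not_le_of_lt j.isLt
  rw [this, Finset.sum_empty]

lemma sufOnes_succ (ℓ : Fin n → Bool) {i : ℕ} (h : i < n) :
    sufOnes ℓ i = (if ℓ ⟨i, h⟩ then (1:ℝ) else 0) + sufOnes ℓ (i+1) := by
  set I : Fin n := ⟨i, h⟩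
  have hnm : I ∉ Finset.univ.filter (fun j : Fin n => i+1 ≤ (j:ℕ)) := by simp [I]
  have he : Finset.univ.filter (fun j : Fin n => i ≤ (j:ℕ))
      = insert I (Finset.univ.filter (fun j : Fin n => i+1 ≤ (j:ℕ))) := by
    ext j
    simp only [Finset.mem_filter, Finset.mem_univ, true_and, Finset.mem_insert]
    constructor
    · intro hj
      rcases eq_or_lt_of_le hj with h' | h'
      · exact Or.inl (Fin.ext h'.symm)
      · exact Or.inr h'
    · rintro (rfl | hj)
      · exact le_refl _
      · omega
  rw [sufOnes, he, Finset.sum_insert hnm, sufOnes]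

lemma Ag_n (a : Fin n → Bool) : Ag a n = {a} := by
  ext ℓ
  simp only [Ag, Finset.mem_filter, Finset.mem_univ, true_and, Finset.mem_singleton]
  constructor
  · intro h; funext j; exact h j j.isLt
  · intro h j _; rw [h]

lemma mem_Ag {a ℓ : Fin n → Bool} {i : ℕ} :
    ℓ ∈ Ag a i ↔ ∀ j : Fin n, (j:ℕ) < i → ℓ j = a j := by
  simp [Ag]

lemma mem_Ag_update {a ℓ : Fin n → Bool} {i : ℕ} (h : i < n) (b : Bool) :
    ℓ ∈ Ag (Function.update a ⟨i, h⟩ b) (i+1) ↔ (ℓ ∈ Ag a i ∧ ℓ ⟨i, h⟩ = b) := by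
  set I : Fin n := ⟨i, h⟩
  rw [mem_Ag, mem_Ag]
  constructor
  · intro hag
    refine ⟨fun j hj => ?_, ?_⟩
    · have hne : j ≠ I := by
        intro hji; rw [hji] at hj; exact absurd hj (lt_irrefl i)
      rw [hag j (Nat.lt_succ_of_lt hj), Function.update_of_ne hne]
    · have := hag I (Nat.lt_succ_self i)
      rwa [Function.update_self] at this
  · rintro ⟨hag, hIb⟩ j hj
    by_cases hje : j = I
    · subst hje; rw [Function.update_self]; exact hIb
    · have hji : (j:ℕ) < i := by
        rcases Nat.lt_succ_iff_lt_or_eq.mp hj with h' | h'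
        · exact h'
        · exact absurd (Fin.ext h') hje
      rw [Function.update_of_ne hje, hag j hji]

lemma Ag_split {i : ℕ} (h : i < n) (a : Fin n → Bool) (g : (Fin n → Bool) → ℝ) :
    ∑ ℓ ∈ Ag a i, g ℓ
      = (∑ ℓ ∈ Ag (Function.update a ⟨i, h⟩ true) (i+1), g ℓ)
        + ∑ ℓ ∈ Ag (Function.update a ⟨i, h⟩ false) (i+1), g ℓ := by
  rw [← Finset.sum_union]
  · apply Finset.sum_congr _ (fun _ _ => rfl)
    ext ℓ
    rw [Finset.mem_union, mem_Ag_update h true, mem_Ag_update h false]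
    constructor
    · intro hmem
      cases hb : ℓ ⟨i, h⟩
      · exact Or.inr ⟨hmem, rfl⟩
      · exact Or.inl ⟨hmem, rfl⟩
    · rintro (⟨hm, _⟩ | ⟨hm, _⟩) <;> exact hm
  · rw [Finset.disjoint_left]
    rintro ℓ hmt hmf
    rw [mem_Ag_update h true] at hmt
    rw [mem_Ag_update h false] at hmf
    rw [hmt.2] at hmf
    exact absurd hmf.2 (by simp)

lemma denom_pos (hw1 : 0 < w1) (hw0 : 0 < w0) {k1 k0 : ℕ} (hk1 : k1 ≤ m1) (hk0 : k0 ≤ m0)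
    (hlt : k1 + k0 < m1 + m0) :
    0 < ((m1:ℝ) - k1) * w1 + ((m0:ℝ) - k0) * w0 := by
  rcases lt_or_eq_of_le hk1 with hlt1 | heq1
  · have h1 : (k1:ℝ) + 1 ≤ m1 := by exact_mod_cast hlt1
    have h2 : (k0:ℝ) ≤ m0 := by exact_mod_cast hk0
    nlinarith
  · have h0 : k0 < m0 := by omega
    have h1 : (k1:ℝ) = m1 := by exact_mod_cast heq1
    have h2 : (k0:ℝ) + 1 ≤ m0 := by exact_mod_cast h0
    nlinarith

lemma F_sum {k1 k0 : ℕ} (hd : 0 < ((m1:ℝ) - k1) * w1 + ((m0:ℝ) - k0) * w0) :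
    F m1 m0 w1 w0 k1 k0 true + F m1 m0 w1 w0 k1 k0 false = 1 := by
  simp only [F, if_pos, if_neg, Bool.true_eq_false, Bool.false_eq_true, ite_true, ite_false]
  exact frac_sum_eq_one hd

lemma F_cast_true {k1 k0 : ℕ} (hk1 : k1 ≤ m1) (hk0 : k0 ≤ m0) :
    F m1 m0 w1 w0 k1 k0 true
      = ((m1-k1:ℕ):ℝ) * w1 / (((m1-k1:ℕ):ℝ) * w1 + ((m0-k0:ℕ):ℝ) * w0) := by
  simp [F, Nat.cast_sub hk1, Nat.cast_sub hk0]

lemma F_cast_false {k1 k0 : ℕ} (hk1 : k1 ≤ m1) (hk0 : k0 ≤ m0) :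
    F m1 m0 w1 w0 k1 k0 false
      = ((m0-k0:ℕ):ℝ) * w0 / (((m1-k1:ℕ):ℝ) * w1 + ((m0-k0:ℕ):ℝ) * w0) := by
  simp [F, Nat.cast_sub hk1, Nat.cast_sub hk0]

lemma bridge (hw1 : 0 < w1) (hw0 : 0 < w0) (hnm : n ≤ m1 + m0) :
    ∀ (d i : ℕ) (a : Fin n → Bool), i + d = n → cnt a true i ≤ m1 → cnt a false i ≤ m0 →
    (∑ ℓ ∈ Ag a i, wWeight m1 m0 w1 w0 ℓ) = wpre m1 m0 w1 w0 a i ∧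
    (∑ ℓ ∈ Ag a i, wWeight m1 m0 w1 w0 ℓ * sufOnes ℓ i)
      = wpre m1 m0 w1 w0 a i * pE w1 w0 d (m1 - cnt a true i) (m0 - cnt a false i) := by
  intro d
  induction d with
  | zero =>
    intro i a hi _ _
    have : i = n := by omega
    subst this
    rw [Ag_n, Finset.sum_singleton, Finset.sum_singleton, sufOnes_n, wWeight_eq]
    simp [pE]
  | succ d ih =>
    intro i a hi hk1 hk0
    have hin : i < n := by omega
    have hitot : cnt a true i + cnt a false i = i := cnt_total a i (le_of_lt hin)
    set I : Fin n := ⟨i, hin⟩ with hI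
    -- facts about children a_b := update a I b
    have child : ∀ b : Bool,
        (∑ ℓ ∈ Ag (Function.update a I b) (i+1), wWeight m1 m0 w1 w0 ℓ)
          = wpre m1 m0 w1 w0 a i * F m1 m0 w1 w0 (cnt a true i) (cnt a false i) b ∧
        (∑ ℓ ∈ Ag (Function.update a I b) (i+1), wWeight m1 m0 w1 w0 ℓ * sufOnes ℓ (i+1))
          = wpre m1 m0 w1 w0 a i * F m1 m0 w1 w0 (cnt a true i) (cnt a false i) b
            * pE w1 w0 d (m1 - (cnt a true i + if b then 1 else 0))
                (m0 - (cnt a false i + if b then 0 else 1)) := by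
      intro b
      set ab := Function.update a I b with hab
      have hag : ∀ j : Fin n, (j:ℕ) < i → ab j = a j := by
        intro j hj
        apply Function.update_of_ne
        intro hji; rw [hji] at hj; exact absurd hj (lt_irrefl i)
      have habI : ab I = b := Function.update_self I b a
      have hcs : ∀ b', cnt ab b' (i+1)
          = cnt a b' i + (if b = b' then 1 else 0) := by
        intro b'
        rw [cnt_succ ab b' hin, ← hI, habI, cnt_agree hag b' (le_refl i)]
      have hw : wpre m1 m0 w1 w0 ab (i+1)
          = wpre m1 m0 w1 w0 a i * F m1 m0 w1 w0 (cnt a true i) (cnt a false i) b := by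
        rw [wpre_succ ab hin, ← hI, habI, wpre_congr hag,
          cnt_agree hag true (le_refl i), cnt_agree hag false (le_refl i)]
      -- over-cap cases
      by_cases hover : (b = true ∧ cnt a true i = m1) ∨ (b = false ∧ cnt a false i = m0)
      · have hz : ∀ ℓ ∈ Ag ab (i+1), wWeight m1 m0 w1 w0 ℓ = 0 := by
          intro ℓ hm
          rw [mem_Ag] at hm
          have hlI : ℓ I = b := by rw [hm I (Nat.lt_succ_self i), habI]
          have hcl : ∀ b', cnt ℓ b' i = cnt a b' i := by
            intro b'
            rw [cnt_agree (a := ab) (fun j hj => hm j (Nat.lt_succ_of_lt hj)) b' (le_refl i),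
              cnt_agree hag b' (le_refl i)]
          rcases hover with ⟨hb, hcap⟩ | ⟨hb, hcap⟩
          · subst hb
            exact wWeight_zero_one I hlI (by rw [hcl true, hcap])
          · subst hb
            exact wWeight_zero_zero I hlI (by rw [hcl false, hcap])
        have hF0 : F m1 m0 w1 w0 (cnt a true i) (cnt a false i) b = 0 := by
          rcases hover with ⟨hb, hcap⟩ | ⟨hb, hcap⟩ <;> subst hb <;> rw [hcap] <;> simp [F]
        rw [hF0]
        constructor
        · rw [Finset.sum_eq_zero hz]; ring
        · rw [Finset.sum_eq_zero (fun ℓ hm => by rw [hz ℓ hm, zero_mul])]; ring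
      · push_neg at hover
        have hcap1 : cnt ab true (i+1) ≤ m1 := by
          rw [hcs true]
          cases b
          · rw [if_neg (by simp : ¬ (false = true))]
            omega
          · rw [if_pos rfl]
            have hne := hover.1 rfl
            omega
        have hcap0 : cnt ab false (i+1) ≤ m0 := by
          rw [hcs false]
          cases b
          · rw [if_pos rfl]
            have hne := hover.2 rfl
            omega
          · rw [if_neg (by simp : ¬ (true = false))]
            omega
        obtain ⟨hT, hU⟩ := ih (i+1) ab (by omega) hcap1 hcap0
        rw [hcs true, hcs false] at hU
        constructor
        · rw [hT, hw]
        · rw [hU, hw]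
          cases b <;> simp
    have ht := child true
    have hf := child false
    have hdpos : 0 < ((m1:ℝ) - cnt a true i) * w1 + ((m0:ℝ) - cnt a false i) * w0 :=
      denom_pos hw1 hw0 hk1 hk0 (by omega)
    constructor
    · rw [Ag_split hin a (fun ℓ => wWeight m1 m0 w1 w0 ℓ), ht.1, hf.1, ← mul_add,
        F_sum hdpos, mul_one]
    · rw [Ag_split hin a (fun ℓ => wWeight m1 m0 w1 w0 ℓ * sufOnes ℓ i)]
      have hsplit_t : ∑ ℓ ∈ Ag (Function.update a I true) (i+1),
            wWeight m1 m0 w1 w0 ℓ * sufOnes ℓ i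
          = (∑ ℓ ∈ Ag (Function.update a I true) (i+1), wWeight m1 m0 w1 w0 ℓ)
            + ∑ ℓ ∈ Ag (Function.update a I true) (i+1),
                wWeight m1 m0 w1 w0 ℓ * sufOnes ℓ (i+1) := by
        rw [← Finset.sum_add_distrib]
        apply Finset.sum_congr rfl
        intro ℓ hm
        have hlI : ℓ I = true := ((mem_Ag_update hin true).mp hm).2
        rw [sufOnes_succ ℓ hin, ← hI, hlI]
        simp
        ring
      have hsplit_f : ∑ ℓ ∈ Ag (Function.update a I false) (i+1),
            wWeight m1 m0 w1 w0 ℓ * sufOnes ℓ i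
          = ∑ ℓ ∈ Ag (Function.update a I false) (i+1),
              wWeight m1 m0 w1 w0 ℓ * sufOnes ℓ (i+1) := by
        apply Finset.sum_congr rfl
        intro ℓ hm
        have hlI : ℓ I = false := ((mem_Ag_update hin false).mp hm).2
        rw [sufOnes_succ ℓ hin, ← hI, hlI]
        simp
      have ht2 := ht.2
      have hf2 := hf.2
      norm_num at ht2 hf2
      have e1 : m1 - (cnt a true i + 1) = (m1 - cnt a true i) - 1 := by omega
      have e0 : m0 - (cnt a false i + 1) = (m0 - cnt a false i) - 1 := by omega
      rw [e1] at ht2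
      rw [e0] at hf2
      rw [hsplit_t, hsplit_f, ht.1, ht2, hf2]
      have hpe : pE w1 w0 (d+1) (m1 - cnt a true i) (m0 - cnt a false i)
          = F m1 m0 w1 w0 (cnt a true i) (cnt a false i) true
              * (1 + pE w1 w0 d ((m1 - cnt a true i) - 1) (m0 - cnt a false i))
            + F m1 m0 w1 w0 (cnt a true i) (cnt a false i) false
              * pE w1 w0 d (m1 - cnt a true i) ((m0 - cnt a false i) - 1) := by
        rw [F_cast_true hk1 hk0, F_cast_false hk1 hk0]
        simp only [pE]
      rw [hpe]
      ring

lemma F_true_def (k1 k0 : ℕ) : F m1 m0 w1 w0 k1 k0 true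
    = ((m1:ℝ) - k1) * w1 / (((m1:ℝ) - k1) * w1 + ((m0:ℝ) - k0) * w0) := by simp [F]

lemma F_false_def (k1 k0 : ℕ) : F m1 m0 w1 w0 k1 k0 false
    = ((m0:ℝ) - k0) * w0 / (((m1:ℝ) - k1) * w1 + ((m0:ℝ) - k0) * w0) := by simp [F]

lemma fsum_split (ℓ : Fin n → Bool) (k : ℕ) (hk : k ≤ n) :
    fsum ℓ = (cnt ℓ true k : ℝ) + sufOnes ℓ k := by
  have hu : (Finset.univ : Finset (Fin n))
      = Finset.univ.filter (fun j : Fin n => (j:ℕ) < k)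
        ∪ Finset.univ.filter (fun j : Fin n => k ≤ (j:ℕ)) := by
    ext j
    simp only [Finset.mem_univ, Finset.mem_union, Finset.mem_filter, true_and, true_iff]
    omega
  have hd : Disjoint (Finset.univ.filter (fun j : Fin n => (j:ℕ) < k))
      (Finset.univ.filter (fun j : Fin n => k ≤ (j:ℕ))) := by
    rw [Finset.disjoint_left]
    intro j hj1 hj2
    rw [Finset.mem_filter] at hj1 hj2
    omega
  simp only [fsum]
  rw [hu, Finset.sum_union hd]
  congr 1
  rw [Finset.sum_boole, cnt, ← Finset.filter_filter]

lemma wpre_pos (hw1 : 0 < w1) (hw0 : 0 < w0) (hnm : n ≤ m1 + m0) {a : Fin n → Bool}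
    {i : ℕ} (hi : i ≤ n) (hc1 : cnt a true i ≤ m1) (hc0 : cnt a false i ≤ m0) :
    0 < wpre m1 m0 w1 w0 a i := by
  apply Finset.prod_pos
  intro j hj
  rw [Finset.mem_filter] at hj
  have hjlt : (j:ℕ) < i := hj.2
  have hm1 : cnt a true (j:ℕ) ≤ m1 := le_trans (cnt_mono a true (le_of_lt hjlt)) hc1
  have hm0 : cnt a false (j:ℕ) ≤ m0 := le_trans (cnt_mono a false (le_of_lt hjlt)) hc0
  have htot : cnt a true (j:ℕ) + cnt a false (j:ℕ) = (j:ℕ) :=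
    cnt_total a _ (le_of_lt j.isLt)
  have hd := denom_pos (m1 := m1) (m0 := m0) hw1 hw0 hm1 hm0
    (by have := j.isLt; omega)
  have hsucc : ∀ b', cnt a b' ((j:ℕ)+1) = cnt a b' (j:ℕ) + (if a j = b' then 1 else 0) := by
    intro b'
    rw [cnt_succ a b' j.isLt, Fin.eta]
  cases haj : a j
  · have hlt0 : cnt a false (j:ℕ) + 1 ≤ m0 := by
      have h1 := hsucc false
      rw [haj, if_pos rfl] at h1
      have h2 : cnt a false ((j:ℕ)+1) ≤ cnt a false i := cnt_mono a false hjlt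
      omega
    rw [F_false_def]
    apply div_pos _ hd
    have : (cnt a false (j:ℕ):ℝ) + 1 ≤ m0 := by exact_mod_cast hlt0
    nlinarith
  · have hlt1 : cnt a true (j:ℕ) + 1 ≤ m1 := by
      have h1 := hsucc true
      rw [haj, if_pos rfl] at h1
      have h2 : cnt a true ((j:ℕ)+1) ≤ cnt a true i := cnt_mono a true hjlt
      omega
    rw [F_true_def]
    apply div_pos _ hd
    have : (cnt a true (j:ℕ):ℝ) + 1 ≤ m1 := by exact_mod_cast hlt1
    nlinarith

lemma condE_eq (hw1 : 0 < w1) (hw0 : 0 < w0) (hnm : n ≤ m1 + m0) (i : Fin n)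
    (a : Fin n → Bool) (b : Bool)
    (h1 : cnt a true (i:ℕ) + (if b = true then 1 else 0) ≤ m1)
    (h0 : cnt a false (i:ℕ) + (if b = true then 0 else 1) ≤ m0) :
    condE m1 m0 w1 w0 i a b
      = (cnt a true (i:ℕ) : ℝ) + (if b = true then 1 else 0)
        + pE w1 w0 (n - ((i:ℕ)+1)) (m1 - (cnt a true (i:ℕ) + if b = true then 1 else 0))
            (m0 - (cnt a false (i:ℕ) + if b = true then 0 else 1)) := by
  have hin : (i:ℕ) < n := i.isLt
  set ab := Function.update a i b with hab
  have hag : ∀ j : Fin n, (j:ℕ) < (i:ℕ) → ab j = a j := by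
    intro j hj
    apply Function.update_of_ne
    intro hji; rw [hji] at hj; exact absurd hj (lt_irrefl _)
  have habI : ab i = b := Function.update_self i b a
  have hfilter : Finset.univ.filter
        (fun ℓ : Fin n → Bool => (∀ j, j < i → ℓ j = a j) ∧ ℓ i = b)
      = Ag ab ((i:ℕ)+1) := by
    ext ℓ
    have hmem := mem_Ag_update (a := a) (ℓ := ℓ) hin b
    rw [Fin.eta] at hmem
    rw [← hab] at hmem
    rw [hmem, mem_Ag, Finset.mem_filter]
    simp only [Finset.mem_univ, true_and]
    constructor
    · rintro ⟨hpre, hib⟩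
      exact ⟨fun j hj => hpre j (Fin.lt_def.mpr hj), hib⟩
    · rintro ⟨hpre, hib⟩
      exact ⟨fun j hj => hpre j (Fin.lt_def.mp hj), hib⟩
  have hcs : ∀ b', cnt ab b' ((i:ℕ)+1) = cnt a b' (i:ℕ) + (if b = b' then 1 else 0) := by
    intro b'
    rw [cnt_succ ab b' hin, Fin.eta, habI, cnt_agree hag b' (le_refl _)]
  have hnegb : (if b = false then 1 else 0) = (if b = true then 0 else 1) := by
    cases b <;> simp
  have hcap1 : cnt ab true ((i:ℕ)+1) ≤ m1 := by rw [hcs true]; exact h1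
  have hcap0 : cnt ab false ((i:ℕ)+1) ≤ m0 := by rw [hcs false, hnegb]; exact h0
  obtain ⟨hT, hU⟩ := bridge hw1 hw0 hnm (n - ((i:ℕ)+1)) ((i:ℕ)+1) ab (by omega) hcap1 hcap0
  have hD : 0 < wpre m1 m0 w1 w0 ab ((i:ℕ)+1) :=
    wpre_pos hw1 hw0 hnm (by omega) hcap1 hcap0
  have hNum : (∑ ℓ ∈ Ag ab ((i:ℕ)+1), wWeight m1 m0 w1 w0 ℓ * fsum ℓ)
      = (cnt ab true ((i:ℕ)+1) : ℝ) * wpre m1 m0 w1 w0 ab ((i:ℕ)+1)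
        + wpre m1 m0 w1 w0 ab ((i:ℕ)+1)
          * pE w1 w0 (n - ((i:ℕ)+1)) (m1 - cnt ab true ((i:ℕ)+1))
              (m0 - cnt ab false ((i:ℕ)+1)) := by
    rw [← hU, ← hT, Finset.mul_sum, ← Finset.sum_add_distrib]
    apply Finset.sum_congr rfl
    intro ℓ hm
    have hfs : fsum ℓ = (cnt ℓ true ((i:ℕ)+1) : ℝ) + sufOnes ℓ ((i:ℕ)+1) :=
      fsum_split ℓ ((i:ℕ)+1) (by omega)
    rw [hfs, cnt_agree (mem_Ag.mp hm) true (le_refl _)]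
    ring
  rw [condE, hfilter, hNum, hT]
  rw [hcs true, hcs false, hnegb]
  field_simp
  push_cast
  ring

end Comb

end W15

/-- Averaged Lipschitz Condition with constants `cᵢ = 1` for the sum of draws in the
Wallenius scheme: conditioned on any realizable prefix,
`0 ≤ E[f | prefix, Xᵢ = 1] - E[f | prefix, Xᵢ = 0] ≤ 1`. -/
theorem stmt15 (m1 m0 : ℕ) (w1 w0 : ℝ) (n : ℕ) (hn : 1 ≤ n) (hnm : n ≤ m1 + m0)
    (hw0 : 1 ≤ w0) (hw : w0 ≤ w1)
    (i : Fin n) (a : Fin n → Bool)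
    (h1 : (Finset.univ.filter (fun j => j < i ∧ a j = true)).card < m1)
    (h0 : (Finset.univ.filter (fun j => j < i ∧ a j = false)).card < m0) :
    0 ≤ condE m1 m0 w1 w0 i a true - condE m1 m0 w1 w0 i a false ∧
    condE m1 m0 w1 w0 i a true - condE m1 m0 w1 w0 i a false ≤ 1 := by
  have hw1' : (0:ℝ) < w1 := by linarith
  have hw0' : (0:ℝ) < w0 := by linarith
  have hcnt1 : (Finset.univ.filter (fun j => j < i ∧ a j = true)).card
      = W15.cnt a true (i:ℕ) := by
    unfold W15.cnt; congr 1
  have hcnt0 : (Finset.univ.filter (fun j => j < i ∧ a j = false)).card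
      = W15.cnt a false (i:ℕ) := by
    unfold W15.cnt; congr 1
  rw [hcnt1] at h1
  rw [hcnt0] at h0
  have hct : W15.cnt a true (i:ℕ) + W15.cnt a false (i:ℕ) = (i:ℕ) :=
    W15.cnt_total a _ (le_of_lt i.isLt)
  have hT := W15.condE_eq hw1' hw0' hnm i a true (by simp; omega) (by simp; omega)
  have hF := W15.condE_eq hw1' hw0' hnm i a false (by simp; omega) (by simp; omega)
  norm_num at hT hF
  have e1 : m1 - (W15.cnt a true (i:ℕ) + 1) = (m1 - W15.cnt a true (i:ℕ)) - 1 := by omega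
  have e0 : m0 - (W15.cnt a false (i:ℕ) + 1) = (m0 - W15.cnt a false (i:ℕ)) - 1 := by omega
  rw [e1] at hT
  rw [e0] at hF
  have hD := W15.pE_D hw1' hw0' (n - ((i:ℕ)+1)) (m1 - W15.cnt a true (i:ℕ))
    (m0 - W15.cnt a false (i:ℕ)) (by omega) (by omega)
    (by have := i.isLt; omega)
  rw [hT, hF]
  constructor
  · linarith [hD.2]
  · linarith [hD.1]
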